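/- arXiv:1709.01897 — 6 statements merged into one kernel-verified Lean document; each statement's English description precedes it below -/
import Mathlib

section
/- Let X be a compact metric space, φ : X → X a homeomorphism, and G a group acting on X by homeomorphisms commuting with φ. Assume the set of periodic points of φ is nonempty and that for each k ≥ 1 the set of points of φ-period k is finite. If g ∈ G has infinite order, then the action of G on X is not free. -/
/-- Proposition 2.7: if `g` has infinite order, the action is not free. -/
theorem stmt0 {X : Type*} [MetricSpace X] [CompactSpace X]
    (φ : X ≃ₜ X) {G : Type*} [Group G] [MulAction G X]
    (hcont : ∀ g : G, Continuous fun x : X => g • x)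
    (hcomm : ∀ (g : G) (x : X), g • (φ x) = φ (g • x))
    (hper : ∃ (x : X) (k : ℕ), 1 ≤ k ∧ (φ : X → X)^[k] x = x)
    (hfin : ∀ k : ℕ, 1 ≤ k → {x : X | (φ : X → X)^[k] x = x}.Finite)
    (g : G) (hg : ¬ IsOfFinOrder g) :
    ¬ (∀ (h : G) (x : X), h • x = x → h = 1) := by
  intro hfree
  obtain ⟨x, k, hk, hx⟩ := hper
  -- the action of any h commutes with iterates of φ
  have hcommIt : ∀ (h : G) (n : ℕ) (y : X), h • ((φ : X → X)^[n] y) = (φ : X → X)^[n] (h • y) := by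
    intro h n
    induction n with
    | zero => intro y; simp
    | succ n ih =>
      intro y
      rw [Function.iterate_succ_apply', Function.iterate_succ_apply', hcomm, ih]
  -- all points gⁿ • x lie in the finite set of period-k points
  set S : Set X := {x : X | (φ : X → X)^[k] x = x} with hS
  have hmem : ∀ n : ℕ, g ^ n • x ∈ S := by
    intro n
    show (φ : X → X)^[k] (g ^ n • x) = g ^ n • x
    rw [← hcommIt, hx]
  have hSfin : S.Finite := hfin k hk
  have : Finite S := hSfin
  obtain ⟨m, n, hmn, heq⟩ :=
    Finite.exists_ne_map_eq_of_infinite (fun n : ℕ => (⟨g ^ n • x, hmem n⟩ : S))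
  wlog hlt : n < m generalizing m n
  · exact this n m hmn.symm heq.symm (by omega)
  have heq' : g ^ m • x = g ^ n • x := congrArg Subtype.val heq
  have hfix : g ^ (m - n) • x = x := by
    have hpow : g ^ m = g ^ n * g ^ (m - n) := by
      rw [← pow_add]; congr 1; omega
    rw [hpow, mul_smul] at heq'
    exact smul_left_cancel _ heq'
  have h1 : g ^ (m - n) = 1 := hfree _ x hfix
  exact hg (isOfFinOrder_iff_pow_eq_one.mpr ⟨m - n, by omega, h1⟩)
end

section
/- Let X be a compact metric space, φ : X → X a homeomorphism admitting a point x₀ whose φ-orbit {φ^n(x₀) : n ∈ ℤ} is dense in X, and let G be a group acting effectively on X by homeomorphisms commuting with φ. Then for every g ∈ G with g ≠ e, the set {x ∈ X : g·x ≠ x} is open and dense in X. -/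
/-!
The fixed-point set of `g` is closed, and it is invariant under `φ` because `g` commutes with `φ`.
If it had interior, the dense orbit would enter it; invariance then puts the whole orbit, hence
its closure `X`, inside it, so `g` would act trivially.
-/

open MulAction

theorem eq_univ_of_zpow_invariant_of_interior_nonempty {X : Type*} [TopologicalSpace X]
    {f : Equiv.Perm X} {x₀ : X} (hdense : Dense (Set.range fun n : ℤ => (f ^ n) x₀))
    {F : Set X} (hF : IsClosed F) (hinv : ∀ (n : ℤ) (x : X), x ∈ F → (f ^ n) x ∈ F)
    (hint : (interior F).Nonempty) : F = Set.univ := by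
  obtain ⟨_, ⟨n, rfl⟩, hn⟩ := hdense.exists_mem_open isOpen_interior hint
  have hx₀ : x₀ ∈ F := by
    simpa [zpow_neg] using hinv (-n) _ (interior_subset hn)
  have horbit : Set.range (fun n : ℤ => (f ^ n) x₀) ⊆ F := by
    rintro _ ⟨m, rfl⟩
    exact hinv m x₀ hx₀
  exact Set.eq_univ_of_univ_subset (hdense.closure_eq ▸ hF.closure_subset_iff.mpr horbit)

theorem zpow_apply_mem_fixedBy {G X : Type*} [Group G] [MulAction G X] {g : G}
    {f : Equiv.Perm X} (hcomm : ∀ x, g • f x = f (g • x)) (n : ℤ) {x : X}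
    (hx : x ∈ fixedBy X g) : (f ^ n) x ∈ fixedBy X g := by
  have hcommute : Commute (toPerm g) f := Equiv.ext hcomm
  have hcommute_zpow : g • (f ^ n) x = (f ^ n) (g • x) :=
    congrArg (· x) (hcommute.zpow_right n).eq
  rw [mem_fixedBy, hcommute_zpow, mem_fixedBy.mp hx]

theorem stmt1_general {X : Type*} [MetricSpace X]
    (φ : X ≃ₜ X) (x₀ : X)
    (hdense : Dense (Set.range fun n : ℤ => (φ.toEquiv ^ n) x₀))
    {G : Type*} [Group G] [MulAction G X]
    (hcont : ∀ g : G, Continuous fun x : X => g • x)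
    (hcomm : ∀ (g : G) (x : X), g • (φ x) = φ (g • x))
    (heff : ∀ g : G, g ≠ 1 → ∃ x : X, g • x ≠ x)
    (g : G) (hg : g ≠ 1) :
    IsOpen {x : X | g • x ≠ x} ∧ Dense {x : X | g • x ≠ x} := by
  have hclosed : IsClosed (fixedBy X g) := isClosed_fixedPoints (hcont g)
  refine ⟨hclosed.isOpen_compl, ?_⟩
  show Dense (fixedBy X g)ᶜ
  rw [← interior_eq_empty_iff_dense_compl, ← Set.not_nonempty_iff_eq_empty]
  intro hint
  have hall : fixedBy X g = Set.univ :=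
    eq_univ_of_zpow_invariant_of_interior_nonempty hdense hclosed
      (fun n _ => zpow_apply_mem_fixedBy (hcomm g) n) hint
  obtain ⟨x, hx⟩ := heff g hg
  exact hx (mem_fixedBy.mp (hall.symm ▸ Set.mem_univ x))

/-- Proposition 2.8: for an effective action commuting with a homeomorphism having
a dense orbit, each non-fixed-point set is open and dense. -/
theorem stmt1 {X : Type*} [MetricSpace X] [CompactSpace X]
    (φ : X ≃ₜ X) (x₀ : X)
    (hdense : Dense (Set.range fun n : ℤ => (φ.toEquiv ^ n) x₀))
    {G : Type*} [Group G] [MulAction G X]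
    (hcont : ∀ g : G, Continuous fun x : X => g • x)
    (hcomm : ∀ (g : G) (x : X), g • (φ x) = φ (g • x))
    (heff : ∀ g : G, g ≠ 1 → ∃ x : X, g • x ≠ x)
    (g : G) (hg : g ≠ 1) :
    IsOpen {x : X | g • x ≠ x} ∧ Dense {x : X | g • x ≠ x} :=
  stmt1_general φ x₀ hdense hcont hcomm heff g hg
end

section
/- Let X be a topological space written as a disjoint union of nonempty clopen subsets X₁, …, X_N, let φ : X → X be a homeomorphism cyclically permuting the X_i (φ(X_i) = X_{i+1 mod N}), and suppose for each i there is a point x_i ∈ X_i whose φ^N-orbit is dense in X_i. If β : X → X is a homeomorphism commuting with φ, then there exists a permutation σ of {1, …, N} such that β(X_i) = X_{σ(i)} for each i. -/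
/-!
Since `φ` cycles the `N` pieces, `φ ^ N` preserves each `Xs i`. A homeomorphism `γ` commuting
with `φ` commutes with `φ ^ N`, so it carries the `φ ^ N`-orbit of `x i` into the `φ ^ N`-orbit of
`γ (x i)`, which stays inside the piece `Xs j` containing `γ (x i)`. As `Xs j` is closed and the
orbit of `x i` is dense in `Xs i`, we get `γ '' Xs i ⊆ Xs j`. Applying this to `β` and `β⁻¹`, the
induced maps on indices are mutually inverse, because the pieces are nonempty and disjoint.
-/

open Set Function Pointwise Fin.NatCast

theorem pow_smul_eq_add_of_smul_eq_add_one {G α : Type*} [Monoid G] [MulAction G α] {N : ℕ}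
    [NeZero N] {g : G} {S : Fin N → α} (h : ∀ i, g • S i = S (i + 1)) (n : ℕ) (i : Fin N) :
    g ^ n • S i = S (i + n) := by
  induction n with
  | zero => simp
  | succ n ih => rw [pow_succ', mul_smul, ih, h, Nat.cast_succ, add_assoc]

theorem Homeomorph.image_subset_of_commute_of_subset_closure_orbit {X : Type*}
    [TopologicalSpace X] {g : Equiv.Perm X} {γ : X ≃ₜ X} (hγ : Commute γ.toEquiv g)
    {S T : Set X} {x : X} (hS : S ⊆ closure (range fun k : ℤ => (g ^ k) x))
    (hT : IsClosed T) (hgT : g • T = T) (hx : γ x ∈ T) : γ '' S ⊆ T := by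
  have horbit : range (fun k : ℤ => (g ^ k) (γ x)) ⊆ T := by
    rintro _ ⟨k, rfl⟩
    have hgkT : g ^ k • T = T :=
      Subgroup.zpow_mem (MulAction.stabilizer (Equiv.Perm X) T) hgT k
    exact hgkT ▸ smul_mem_smul_set hx
  have himage : γ '' range (fun k : ℤ => (g ^ k) x) = range fun k : ℤ => (g ^ k) (γ x) := by
    rw [← range_comp]
    congr 1
    funext k
    exact congrArg (· x) (hγ.zpow_right k).eq
  calc γ '' S ⊆ γ '' closure (range fun k : ℤ => (g ^ k) x) := image_mono hS
    _ = closure (range fun k : ℤ => (g ^ k) (γ x)) := by rw [γ.image_closure, himage]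
    _ ⊆ T := closure_minimal horbit hT

theorem eq_of_subset_of_pairwise_disjoint {α ι : Type*} {S : ι → Set α}
    (hdisj : Pairwise (Disjoint on S)) {i j : ι} (hne : (S i).Nonempty) (h : S i ⊆ S j) :
    i = j := by
  by_contra hij
  exact hne.ne_empty ((hdisj hij).eq_bot_of_le h)

theorem Equiv.exists_perm_image_eq_of_image_subset {α ι : Type*} (e : α ≃ α) {S : ι → Set α}
    (hne : ∀ i, (S i).Nonempty) (hdisj : Pairwise (Disjoint on S))
    (he : ∀ i, ∃ j, e '' S i ⊆ S j) (he' : ∀ i, ∃ j, e.symm '' S i ⊆ S j) :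
    ∃ σ : Equiv.Perm ι, ∀ i, e '' S i = S (σ i) := by
  choose J hJ using he
  choose J' hJ' using he'
  have hsub : ∀ i, S i ⊆ S (J' (J i)) := fun i =>
    (e.symm_image_image (S i)).symm.subset.trans ((image_mono (hJ i)).trans (hJ' (J i)))
  have hsub' : ∀ i, S i ⊆ S (J (J' i)) := fun i =>
    (e.image_symm_image (S i)).symm.subset.trans ((image_mono (hJ' i)).trans (hJ (J' i)))
  have hJ'J : ∀ i, J' (J i) = i := fun i =>
    (eq_of_subset_of_pairwise_disjoint hdisj (hne i) (hsub i)).symm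
  have hJJ' : ∀ i, J (J' i) = i := fun i =>
    (eq_of_subset_of_pairwise_disjoint hdisj (hne i) (hsub' i)).symm
  refine ⟨⟨J, J', hJ'J, hJJ'⟩, fun i => (hJ i).antisymm ?_⟩
  calc S (J i) = e '' (e.symm '' S (J i)) := (e.image_symm_image _).symm
    _ ⊆ e '' S i := image_mono ((hJ' (J i)).trans (by rw [hJ'J]))

theorem stmt6_general {X : Type*} [TopologicalSpace X] (N : ℕ) [NeZero N]
    (Xs : Fin N → Set X)
    (hne : ∀ i, (Xs i).Nonempty)
    (hclopen : ∀ i, IsClopen (Xs i))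
    (hdisj : ∀ i j, i ≠ j → Disjoint (Xs i) (Xs j))
    (hcover : (⋃ i, Xs i) = Set.univ)
    (φ : X ≃ₜ X) (hφ : ∀ i, (φ : X → X) '' Xs i = Xs (i + 1))
    (x : Fin N → X)
    (hdense : ∀ i, Xs i ⊆ closure (Set.range fun k : ℤ => ((φ.toEquiv ^ (N : ℤ)) ^ k) (x i)))
    (β : X ≃ₜ X) (hβφ : ∀ y : X, β (φ y) = φ (β y)) :
    ∃ σ : Equiv.Perm (Fin N), ∀ i, (β : X → X) '' Xs i = Xs (σ i) := by
  have hφN : ∀ i, φ.toEquiv ^ (N : ℤ) • Xs i = Xs i := fun i => by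
    rw [zpow_natCast, pow_smul_eq_add_of_smul_eq_add_one hφ, Fin.natCast_self, add_zero]
  have hmaps : ∀ γ : X ≃ₜ X, Commute γ.toEquiv φ.toEquiv → ∀ i, ∃ j, γ '' Xs i ⊆ Xs j := by
    intro γ hγ i
    obtain ⟨j, hj⟩ := mem_iUnion.1 (hcover ▸ mem_univ (γ (x i)))
    exact ⟨j, γ.image_subset_of_commute_of_subset_closure_orbit (hγ.zpow_right _) (hdense i)
      (hclopen j).isClosed (hφN j) hj⟩
  have hβ : Commute β.toEquiv φ.toEquiv := Equiv.ext hβφ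
  exact β.toEquiv.exists_perm_image_eq_of_image_subset hne (fun i j => hdisj i j)
    (hmaps β hβ) (hmaps β.symm hβ.inv_left)

/-- Lemma 4.16: a homeomorphism commuting with `φ` permutes the mixing components. -/
theorem stmt6 {X : Type*} [TopologicalSpace X] (N : ℕ) [NeZero N]
    (Xs : Fin N → Set X)
    (hne : ∀ i, (Xs i).Nonempty)
    (hclopen : ∀ i, IsClopen (Xs i))
    (hdisj : ∀ i j, i ≠ j → Disjoint (Xs i) (Xs j))
    (hcover : (⋃ i, Xs i) = Set.univ)
    (φ : X ≃ₜ X) (hφ : ∀ i, (φ : X → X) '' Xs i = Xs (i + 1))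
    (x : Fin N → X) (hx : ∀ i, x i ∈ Xs i)
    (hdense : ∀ i, Xs i ⊆ closure (Set.range fun k : ℤ => ((φ.toEquiv ^ (N : ℤ)) ^ k) (x i)))
    (β : X ≃ₜ X) (hβφ : ∀ y : X, β (φ y) = φ (β y)) :
    ∃ σ : Equiv.Perm (Fin N), ∀ i, (β : X → X) '' Xs i = Xs (σ i) :=
  stmt6_general N Xs hne hclopen hdisj hcover φ hφ x hdense β hβφ
end

section
/- Let A be a unital C*-algebra, β ∈ Aut(A), and let A ⋊_β ℤ denote the crossed product, generated by A and a unitary u with u a u* = β(a) for all a ∈ A. Let σ be a tracial state on A ⋊_β ℤ, let ε > 0, and let f ∈ A be a positive contraction with σ(f) > 1 − ε² and f·β(f) = 0. Then for every a ∈ A with ‖a‖ ≤ 1 and ‖f a β(f)‖ < ε we have |σ(a u)| < 2ε. -/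
open ComplexOrder

section aux
variable {C : Type*} [NormedRing C] [StarRing C] [CStarRing C]
    [CompleteSpace C] [NormedAlgebra ℂ C] [StarModule ℂ C]
    [PartialOrder C] [StarOrderedRing C]

set_option linter.unusedSectionVars false

noncomputable abbrev myCStar : CStarAlgebra C :=
  { ‹NormedRing C›, ‹StarRing C›, ‹CStarRing C›, ‹CompleteSpace C›,
    ‹NormedAlgebra ℂ C›, ‹StarModule ℂ C› with }

variable (σ : C →ₗ[ℂ] ℂ) (hσpos : ∀ x : C, 0 ≤ x → 0 ≤ σ x)

include hσpos

lemma sq_im (y : C) : (σ (star y * y)).im = 0 ∧ 0 ≤ (σ (star y * y)).re := by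
  have h := hσpos _ (star_mul_self_nonneg y)
  rw [Complex.le_def] at h
  exact ⟨h.2.symm, by simpa using h.1⟩

lemma herm (x : C) : σ (star x) = starRingEnd ℂ (σ x) := by
  have h1 := (sq_im σ hσpos (1 + x)).1
  have h2 := (sq_im σ hσpos (1 + Complex.I • x)).1
  have hT := (sq_im σ hσpos x).1
  have e1 : σ (star (1 + x) * (1 + x)) = σ 1 + σ x + σ (star x) + σ (star x * x) := by
    simp only [star_add, star_one, add_mul, mul_add, one_mul, mul_one, map_add]
    ring
  have e2 : σ (star (1 + Complex.I • x) * (1 + Complex.I • x))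
      = σ 1 + Complex.I * σ x - Complex.I * σ (star x) + σ (star x * x) := by
    have : star (1 + Complex.I • x) = 1 + (-Complex.I) • star x := by
      simp [star_smul, Complex.conj_I]
    rw [this]
    simp only [add_mul, mul_add, one_mul, mul_one, smul_mul_smul_comm, mul_smul_comm,
      smul_mul_assoc, map_add, map_smul]
    simp only [smul_eq_mul]
    ring_nf
    simp only [Complex.I_sq]
    ring
  rw [e1] at h1; rw [e2] at h2
  have hone : (σ 1).im = 0 := by
    have := (sq_im σ hσpos 1).1; simpa using this
  simp only [Complex.add_im, Complex.sub_im, Complex.mul_im, Complex.I_re, Complex.I_im,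
    hone, hT] at h1 h2
  apply Complex.ext <;> simp [Complex.conj_re, Complex.conj_im] <;> linarith

lemma mono {a b : C} (h : a ≤ b) : σ a ≤ σ b := by
  have := hσpos _ (sub_nonneg.2 h)
  rw [map_sub] at this
  exact sub_nonneg.1 this

lemma cs (x y : C) :
    ‖σ (star x * y)‖ ^ 2 ≤ (σ (star x * x)).re * (σ (star y * y)).re := by
  letI core : PreInnerProductSpace.Core ℂ C :=
    { inner := fun a b => σ (star a * b)
      conj_inner_symm := fun a b => by
        show starRingEnd ℂ (σ (star b * a)) = σ (star a * b)
        rw [← herm σ hσpos]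
        simp [star_mul]
      re_inner_nonneg := fun a => (sq_im σ hσpos a).2
      add_left := fun a b c => by
        show σ (star (a + b) * c) = σ (star a * c) + σ (star b * c)
        simp [star_add, add_mul]
      smul_left := fun a b r => by
        show σ (star (r • a) * b) = starRingEnd ℂ r * σ (star a * b)
        simp [star_smul, smul_mul_assoc] }
  have h : ‖σ (star x * y)‖ * ‖σ (star y * x)‖
      ≤ (σ (star x * x)).re * (σ (star y * y)).re :=
    InnerProductSpace.Core.inner_mul_inner_self_le (𝕜 := ℂ) (F := C) x y
  have hsym : σ (star y * x) = starRingEnd ℂ (σ (star x * y)) := by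
    have := herm σ hσpos (star x * y)
    simpa [star_mul] using this
  rw [hsym] at h
  simpa [pow_two, RCLike.norm_conj] using h

lemma abs_le_norm (hσ1 : σ 1 = 1) (x : C) : ‖σ x‖ ≤ ‖x‖ := by
  letI := (myCStar (C := C))
  have h := cs σ hσpos 1 x
  simp only [star_one, one_mul, hσ1, Complex.one_re] at h
  have hle : σ (star x * x) ≤ ((‖x‖ ^ 2 : ℝ) : ℂ) := by
    have h1 : star x * x ≤ algebraMap ℝ C (‖x‖ ^ 2) :=
      CStarAlgebra.star_mul_le_algebraMap_norm_sq
    have h2 := mono σ hσpos h1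
    have h3 : σ (algebraMap ℝ C (‖x‖ ^ 2)) = ((‖x‖ ^ 2 : ℝ) : ℂ) := by
      rw [Algebra.algebraMap_eq_smul_one, LinearMap.map_smul_of_tower, hσ1]
      simp
    rwa [h3] at h2
  rw [Complex.le_def] at hle
  have hre := hle.1
  rw [Complex.ofReal_re] at hre
  nlinarith [norm_nonneg (σ x), norm_nonneg x]

end aux


open ComplexOrder in
/-- Computation in the proof of Theorem 4.13: in a crossed product by `β = Ad u`,
a trace `σ` with `σ(f) > 1 − ε²`, `f·β(f) = 0` and `‖f a β(f)‖ < ε` forces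
`|σ(a u)| < 2ε`. -/
theorem stmt13 {C : Type*} [NormedRing C] [StarRing C] [CStarRing C]
    [CompleteSpace C] [NormedAlgebra ℂ C] [StarModule ℂ C]
    [PartialOrder C] [StarOrderedRing C]
    (σ : C →ₗ[ℂ] ℂ) (hσ1 : σ 1 = 1)
    (hσpos : ∀ x : C, 0 ≤ x → 0 ≤ σ x)
    (hσtr : ∀ x y : C, σ (x * y) = σ (y * x))
    (u : C) (hu : u * star u = 1 ∧ star u * u = 1) :
    ∀ ε : ℝ, 0 < ε → ∀ f a : C,
      0 ≤ f → ‖f‖ ≤ 1 →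
      f * (u * f * star u) = 0 →
      ((1 - ε ^ 2 : ℝ) : ℂ) < σ f →
      ‖a‖ ≤ 1 →
      ‖f * a * (u * f * star u)‖ < ε →
      ‖σ (a * u)‖ < 2 * ε := by
  intro ε hε f a hf hfn _horth hσf ha hsmall
  letI : CStarAlgebra C := myCStar
  obtain ⟨hu1, hu2⟩ := hu
  have hnt : Nontrivial C := by
    refine ⟨1, 0, fun h => ?_⟩
    rw [h, map_zero] at hσ1
    exact one_ne_zero hσ1.symm
  have hnu : ‖u‖ = 1 := by
    have h1 : ‖star u * u‖ = ‖u‖ * ‖u‖ := CStarRing.norm_star_mul_self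
    rw [hu2, norm_one] at h1
    nlinarith [norm_nonneg u]
  have habs : ∀ x : C, ‖σ x‖ ≤ ‖x‖ := abs_le_norm σ hσpos hσ1
  rcases le_or_gt ε (1/2) with hcase | hcase
  · -- main case
    have hfsa : IsSelfAdjoint f := IsSelfAdjoint.of_nonneg hf
    have hff_nonneg : 0 ≤ f * f := by
      have h := star_mul_self_nonneg f
      rwa [hfsa.star_eq] at h
    have hff_le : f * f ≤ 1 := by
      have h2 : f * f = star f * f := by rw [hfsa.star_eq]
      rw [h2, ← CStarAlgebra.norm_le_one_iff_of_nonneg (star f * f) (star_mul_self_nonneg f)]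
      calc ‖star f * f‖ = ‖f‖ ^ 2 := by rw [CStarRing.norm_star_mul_self]; ring
        _ ≤ 1 := by nlinarith [norm_nonneg f]
    set g : C := 1 - f * f with hg_def
    have hg : 0 ≤ g := sub_nonneg.2 hff_le
    set s : C := CFC.sqrt g with hs_def
    have hs0 : 0 ≤ s := CFC.sqrt_nonneg (a := g)
    have hss : s * s = g := CFC.sqrt_mul_sqrt_self g hg
    have hssa : IsSelfAdjoint s := IsSelfAdjoint.of_nonneg hs0
    -- splitting
    have hsplit : σ (a * u) = σ (a * u * (f * f)) + σ (a * u * g) := by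
      rw [← map_add]
      congr 1
      rw [hg_def]
      noncomm_ring
    -- term 1
    have hT1 : σ (a * u * (f * f)) = σ (f * a * (u * f * star u) * u) := by
      have e1 : a * u * (f * f) = (a * u * f) * f := by noncomm_ring
      have e2 : f * a * (u * f * star u) * u = f * (a * u * f) := by
        have : f * a * (u * f * star u) * u = (f * (a * u * f)) * (star u * u) := by
          noncomm_ring
        rw [this, hu2, mul_one]
      rw [e1, e2, hσtr]
    have hT1bound : ‖σ (a * u * (f * f))‖ < ε := by
      rw [hT1]
      calc ‖σ (f * a * (u * f * star u) * u)‖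
          ≤ ‖f * a * (u * f * star u) * u‖ := habs _
        _ ≤ ‖f * a * (u * f * star u)‖ * ‖u‖ := norm_mul_le _ _
        _ = ‖f * a * (u * f * star u)‖ := by rw [hnu, mul_one]
        _ < ε := hsmall
    -- term 2
    have hT2 : σ (a * u * g) = σ (s * (a * u * s)) := by
      have e1 : a * u * g = (a * u * s) * s := by rw [← hss]; noncomm_ring
      rw [e1, hσtr]
    have hg_re_nonneg : 0 ≤ (σ g).re ∧ (σ g).im = 0 := by
      have h := hσpos g hg
      rw [Complex.le_def] at h
      exact ⟨by simpa using h.1, h.2.symm⟩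
    have hkey : star (a * u * s) * (a * u * s) ≤ s * s := by
      have haa : star a * a ≤ 1 := by
        rw [← CStarAlgebra.norm_le_one_iff_of_nonneg (star a * a) (star_mul_self_nonneg a)]
        calc ‖star a * a‖ = ‖a‖ ^ 2 := by rw [CStarRing.norm_star_mul_self]; ring
          _ ≤ 1 := by nlinarith [norm_nonneg a]
      have hconj := star_left_conjugate_le_conjugate haa (u * s)
      have e1 : star (u * s) * (star a * a) * (u * s) = star (a * u * s) * (a * u * s) := by
        simp only [star_mul, hssa.star_eq]
        noncomm_ring
      have e2 : star (u * s) * 1 * (u * s) = s * s := by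
        rw [mul_one, star_mul, hssa.star_eq]
        calc s * star u * (u * s) = s * (star u * u) * s := by noncomm_ring
          _ = s * s := by rw [hu2, mul_one]
      rw [e1, e2] at hconj
      exact hconj
    have hT2bound : ‖σ (a * u * g)‖ ≤ (σ g).re := by
      rw [hT2]
      have hcs : ‖σ (star s * (a * u * s))‖ ^ 2
          ≤ (σ (star s * s)).re * (σ (star (a * u * s) * (a * u * s))).re := cs σ hσpos s _
      rw [hssa.star_eq] at hcs
      have h1 : (σ (star (a * u * s) * (a * u * s))).re ≤ (σ (s * s)).re := by
        have := mono σ hσpos hkey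
        rw [Complex.le_def] at this
        exact this.1
      rw [hss] at hcs h1
      have h2 : ‖σ (s * (a * u * s))‖ ^ 2 ≤ (σ g).re * (σ g).re := by
        calc ‖σ (s * (a * u * s))‖ ^ 2 ≤ (σ g).re * (σ (star (a * u * s) * (a * u * s))).re := hcs
          _ ≤ (σ g).re * (σ g).re := by
              apply mul_le_mul_of_nonneg_left h1 hg_re_nonneg.1
      nlinarith [norm_nonneg (σ (s * (a * u * s))), hg_re_nonneg.1]
    -- estimate of (σ g).re
    have hσf_re : 1 - ε ^ 2 < (σ f).re := by
      rw [Complex.lt_def] at hσf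
      have h := hσf.1
      rwa [Complex.ofReal_re] at h
    have hsq : 0 ≤ (σ ((1 - f) * (1 - f))).re := by
      have h0 : (0:C) ≤ (1 - f) * (1 - f) := by
        have : (1 - f) * (1 - f) = star (1 - f) * (1 - f) := by
          rw [star_sub, star_one, hfsa.star_eq]
        rw [this]; exact star_mul_self_nonneg _
      have h := hσpos _ h0
      rw [Complex.le_def] at h
      simpa using h.1
    have hexp : σ ((1 - f) * (1 - f)) = σ 1 - σ f - σ f + σ (f * f) := by
      have : (1 - f) * (1 - f) = 1 - f - f + f * f := by noncomm_ring
      rw [this]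
      simp only [map_add, map_sub]
    have hgval : σ g = σ 1 - σ (f * f) := by rw [hg_def, map_sub]
    have hg_lt : (σ g).re < 2 * ε ^ 2 := by
      rw [hexp, hσ1] at hsq
      rw [hgval, hσ1] at *
      simp only [Complex.sub_re, Complex.add_re, Complex.one_re] at hsq ⊢
      linarith
    -- conclude
    have h2e : 2 * ε ^ 2 ≤ ε := by nlinarith
    calc ‖σ (a * u)‖ = ‖σ (a * u * (f * f)) + σ (a * u * g)‖ := by
          rw [hsplit]
      _ ≤ ‖σ (a * u * (f * f))‖ + ‖σ (a * u * g)‖ :=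
          norm_add_le _ _
      _ < ε + ε := by
          have := hT2bound.trans_lt hg_lt
          linarith
      _ = 2 * ε := by ring
  · -- easy case ε > 1/2
    calc ‖σ (a * u)‖ ≤ ‖a * u‖ := habs _
      _ ≤ ‖a‖ * ‖u‖ := norm_mul_le _ _
      _ ≤ 1 := by rw [hnu, mul_one]; exact ha
      _ < 2 * ε := by linarith
end

section
/- Let G be a finite group acting on the Cantor set X freely by homeomorphisms. Then the induced action on C(X) has the Rokhlin property: for every ε > 0 there exist projections (p_g)_{g∈G} in C(X) (i.e., indicator functions of clopen sets) with p_g p_h = 0 for g ≠ h, Σ_{g∈G} p_g = 1, and β_h(p_g) = p_{hg} for all g, h ∈ G. -/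
open scoped Classical

private lemma indic_cont {X : Type*} [TopologicalSpace X] {s : Set X} (hs : IsClopen s) :
    Continuous (fun y : X => if y ∈ s then (1:ℝ) else 0) := by
  apply continuous_if
  · intro a ha
    rw [show {a : X | a ∈ s} = s from rfl, hs.frontier_eq] at ha
    exact ha.elim
  · exact continuous_const.continuousOn
  · exact continuous_const.continuousOn

/-- A free action of a finite group on the Cantor set induces an action on `C(X)`
with the Rokhlin property, witnessed by projections. -/
theorem stmt15 {X : Type*} [TopologicalSpace X] [CompactSpace X] [TopologicalSpace.MetrizableSpace X]
    [TotallyDisconnectedSpace X] [Nonempty X]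
    (hperf : Perfect (Set.univ : Set X))
    {G : Type*} [Group G] [Fintype G] [MulAction G X]
    (hcont : ∀ g : G, Continuous fun x : X => g • x)
    (hfree : ∀ (g : G) (x : X), g • x = x → g = 1) :
    ∀ ε : ℝ, 0 < ε → ∃ p : G → C(X, ℝ),
      (∀ g, p g * p g = p g) ∧
      (∀ g h, g ≠ h → p g * p h = 0) ∧
      (∑ g, p g) = 1 ∧
      (∀ g h : G, (p g).comp ⟨fun x : X => h⁻¹ • x, hcont h⁻¹⟩ = p (h * g)) := by
  classical
  haveI : T2Space X := by
    haveI := TopologicalSpace.metrizableSpaceMetric X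
    infer_instance
  intro ε hε
  -- Step 1: local clopen sets with disjoint translates
  have step1 : ∀ x : X, ∃ V : Set X, IsClopen V ∧ x ∈ V ∧
      ∀ g : G, g ≠ 1 → ∀ y ∈ V, g • y ∉ V := by
    intro x
    have hsep : ∀ g : {g : G // g ≠ 1}, ∃ AB : Set X × Set X,
        IsOpen AB.1 ∧ IsOpen AB.2 ∧ x ∈ AB.1 ∧ (g : G) • x ∈ AB.2 ∧ Disjoint AB.1 AB.2 := by
      rintro ⟨g, hg⟩
      have hne : (g : G) • x ≠ x := fun h => hg (hfree g x h)
      obtain ⟨B, A, hB, hA, hgB, hxA, hAB⟩ := t2_separation hne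
      exact ⟨(A, B), hA, hB, hxA, hgB, hAB.symm⟩
    choose AB hA hB hxA hgB hdisj using hsep
    set O : Set X := ⋂ g : {g : G // g ≠ 1}, ((AB g).1 ∩ (fun y => (g : G) • y) ⁻¹' (AB g).2)
      with hO
    have hOopen : IsOpen O :=
      isOpen_iInter_of_finite fun g => (hA g).inter ((hB g).preimage (hcont g))
    have hxO : x ∈ O := Set.mem_iInter.2 fun g => ⟨hxA g, hgB g⟩
    obtain ⟨V, hVclopen, hxV, hVO⟩ := compact_exists_isClopen_in_isOpen hOopen hxO
    refine ⟨V, hVclopen, hxV, ?_⟩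
    intro g hg y hy hgy
    have h1 := Set.mem_iInter.1 (hVO hy) ⟨g, hg⟩
    have h2 := Set.mem_iInter.1 (hVO hgy) ⟨g, hg⟩
    exact (hdisj ⟨g, hg⟩).ne_of_mem h2.1 h1.2 rfl
  choose V hVclopen hxV hVdisj using step1
  -- Step 2: finite subcover
  obtain ⟨t, ht⟩ := IsCompact.elim_finite_subcover isCompact_univ V
    (fun x => (hVclopen x).2) (fun x _ => Set.mem_iUnion.2 ⟨x, hxV x⟩)
  -- Step 3: fundamental domain via induction on the finite cover
  have step3 : ∀ s : Finset X, ∃ U : Set X, IsClopen U ∧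
      (∀ (k : G), ∀ u ∈ U, k • u ∈ U → k = 1) ∧
      (∀ x ∈ s, V x ⊆ {y : X | ∃ g : G, g • y ∈ U}) := by
    intro s
    induction s using Finset.induction_on with
    | empty => exact ⟨∅, isClopen_empty, fun k u hu => hu.elim, fun x hx => absurd hx (Finset.notMem_empty x)⟩
    | @insert a s ha ih =>
      obtain ⟨U, hUclopen, hUfree, hUcov⟩ := ih
      set S : Set X := {y : X | ∃ g : G, g • y ∈ U} with hS
      have hSeq : S = ⋃ g : G, (fun y => g • y) ⁻¹' U := by
        ext y; simp [hS]
      have hSclopen : IsClopen S := by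
        rw [hSeq]
        exact isClopen_iUnion_of_finite fun g => hUclopen.preimage (hcont g)
      refine ⟨U ∪ (V a \ S), hUclopen.union ((hVclopen a).diff hSclopen), ?_, ?_⟩
      · intro k u hu hku
        rcases hu with hu | hu
        · rcases hku with hku | hku
          · exact hUfree k u hu hku
          · exact absurd ⟨k⁻¹, by simpa using hu⟩ hku.2
        · rcases hku with hku | hku
          · exact absurd ⟨k, hku⟩ hu.2
          · by_contra hk
            exact hVdisj a k hk u hu.1 hku.1
      · intro x hx
        rcases Finset.mem_insert.1 hx with rfl | hx
        · intro y hy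
          by_cases hyS : y ∈ S
          · obtain ⟨g, hg⟩ := hyS
            exact ⟨g, Or.inl hg⟩
          · exact ⟨1, Or.inr ⟨by simpa using hy, by simpa using hyS⟩⟩
        · intro y hy
          obtain ⟨g, hg⟩ := hUcov x hx hy
          exact ⟨g, Or.inl hg⟩
  obtain ⟨U, hUclopen, hUfree, hUcov⟩ := step3 t
  -- U's translates cover X
  have hcover : ∀ y : X, ∃ g : G, g • y ∈ U := by
    intro y
    obtain ⟨x, hxt, hyx⟩ := Set.mem_iUnion₂.1 (ht (Set.mem_univ y))
    exact hUcov x hxt hyx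
  -- uniqueness
  have huniq : ∀ (y : X) (g h : G), g • y ∈ U → h • y ∈ U → g = h := by
    intro y g h hg hh
    have : (h * g⁻¹) • (g • y) ∈ U := by
      rw [smul_smul]
      simpa [mul_assoc] using hh
    have := hUfree (h * g⁻¹) (g • y) hg this
    have := mul_inv_eq_one.mp this
    exact this.symm
  -- define the projections
  refine ⟨fun g => ⟨fun x => if g⁻¹ • x ∈ U then (1:ℝ) else 0, ?_⟩, ?_, ?_, ?_, ?_⟩
  · exact (indic_cont hUclopen).comp (hcont _)
  · intro g
    ext x
    simp only [ContinuousMap.mul_apply, ContinuousMap.coe_mk]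
    split_ifs <;> norm_num
  · intro g h hgh
    ext x
    simp only [ContinuousMap.mul_apply, ContinuousMap.coe_mk, ContinuousMap.zero_apply]
    split_ifs with h1 h2
    · exact absurd (huniq x g⁻¹ h⁻¹ h1 h2) (fun e => hgh (inv_injective e))
    all_goals ring
  · ext x
    simp only [ContinuousMap.coe_sum, Finset.sum_apply, ContinuousMap.coe_mk,
      ContinuousMap.one_apply]
    obtain ⟨g₀, hg₀⟩ := hcover x
    rw [Finset.sum_eq_single g₀⁻¹]
    · simp [hg₀]
    · intro b _ hb
      rw [if_neg]
      intro hbU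
      exact hb (by rw [← huniq x b⁻¹ g₀ hbU hg₀]; simp)
    · simp
  · intro g h
    ext x
    simp only [ContinuousMap.comp_apply, ContinuousMap.coe_mk]
    rw [show g⁻¹ • h⁻¹ • x = (h * g)⁻¹ • x by rw [smul_smul, mul_inv_rev]]
end

section
/- Let A be a unital C*-algebra, G a finite group, and β : G → Aut(A) an action. Suppose B ⊆ A is a unital G-invariant C*-subalgebra such that the restricted action of G on B has Rokhlin dimension at most d, and suppose there exists a sequence of automorphisms (α_n) of A with each α_n commuting with β (α_n ∘ β_g = β_g ∘ α_n for all g) and with the property that for every b ∈ B and a ∈ A, ‖[α_n(b), a]‖ → 0 as n → ∞. Then the action β on A has Rokhlin dimension at most d. -/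
open Filter Topology

section RokhlinTower

variable {A : Type*} [NormedRing A] [StarRing A] [NormedAlgebra ℂ A]

lemma StarAlgEquiv.norm_map_of_cstarRing [CStarRing A] [CompleteSpace A] [StarModule ℂ A]
    (φ : A ≃⋆ₐ[ℂ] A) (x : A) : ‖φ x‖ = ‖x‖ := by
  let _ : CStarAlgebra A := { }
  exact NonUnitalStarAlgHom.norm_map φ φ.injective x

/-- Conditions (i)–(iii) of Rokhlin dimension; the central condition (iv) is left out. -/
def IsRokhlinTower [PartialOrder A] {ι G : Type*} [Fintype ι] [Fintype G] [Mul G]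
    (β : G → A ≃⋆ₐ[ℂ] A) (ε : ℝ) (f : ι → G → A) : Prop :=
  (∀ l g, 0 ≤ f l g ∧ ‖f l g‖ ≤ 1) ∧
  (∀ l (g h : G), g ≠ h → ‖f l g * f l h‖ < ε) ∧
  ‖(∑ l, ∑ g, f l g) - 1‖ < ε ∧
  (∀ l (g h : G), ‖β h (f l g) - f l (h * g)‖ < ε)

lemma IsRokhlinTower.map [CStarRing A] [CompleteSpace A] [StarModule ℂ A]
    [PartialOrder A] [StarOrderedRing A] {ι G : Type*} [Fintype ι] [Fintype G] [Mul G]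
    {β : G → A ≃⋆ₐ[ℂ] A} {ε : ℝ} {f : ι → G → A} (hf : IsRokhlinTower β ε f)
    (φ : A ≃⋆ₐ[ℂ] A) (hφβ : ∀ g x, φ (β g x) = β g (φ x)) :
    IsRokhlinTower β ε (fun l g => φ (f l g)) := by
  obtain ⟨hpos, horth, hsum, hequiv⟩ := hf
  refine ⟨fun l g => ⟨?_, ?_⟩, fun l g h hgh => ?_, ?_, fun l g h => ?_⟩
  · exact map_nonneg φ (hpos l g).1
  · exact (φ.norm_map_of_cstarRing _).trans_le (hpos l g).2
  · simpa only [← map_mul, φ.norm_map_of_cstarRing] using horth l g h hgh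
  · rw [← φ.norm_map_of_cstarRing, map_sub, map_one] at hsum
    simpa only [map_sum] using hsum
  · simpa only [← hφβ, ← map_sub, φ.norm_map_of_cstarRing] using hequiv l g h

end RokhlinTower

lemma eventually_forall_norm_commutator_lt {A ι κ : Type*} [SeminormedRing A] [Finite ι]
    {l : Filter κ} {x : κ → ι → A}
    (hx : ∀ i a, Tendsto (fun n => ‖x n i * a - a * x n i‖) l (𝓝 0))
    (F : Finset A) {ε : ℝ} (hε : 0 < ε) :
    ∀ᶠ n in l, ∀ i, ∀ a ∈ F, ‖x n i * a - a * x n i‖ < ε := by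
  simp only [eventually_all, eventually_all_finset]
  exact fun i a _ => (hx i a).eventually_lt_const hε

theorem stmt17_general {A : Type*} [NormedRing A] [StarRing A] [CStarRing A]
    [CompleteSpace A] [NormedAlgebra ℂ A] [StarModule ℂ A]
    [PartialOrder A] [StarOrderedRing A]
    {G : Type*} [Group G] [Fintype G]
    (β : G → A ≃⋆ₐ[ℂ] A)
    (B : StarSubalgebra ℂ A)
    (d : ℕ)
    (hrokB : ∀ ε : ℝ, 0 < ε → ∀ F : Finset A, (∀ a ∈ F, a ∈ B) →
      ∃ f : Fin (d + 1) → G → A,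
        (∀ l g, f l g ∈ B ∧ 0 ≤ f l g ∧ ‖f l g‖ ≤ 1) ∧
        (∀ l (g h : G), g ≠ h → ‖f l g * f l h‖ < ε) ∧
        ‖(∑ l, ∑ g, f l g) - 1‖ < ε ∧
        (∀ l (g h : G), ‖β h (f l g) - f l (h * g)‖ < ε) ∧
        (∀ l g, ∀ a ∈ F, ‖f l g * a - a * f l g‖ < ε))
    (α : ℕ → A ≃⋆ₐ[ℂ] A)
    (hαβ : ∀ (n : ℕ) (g : G) (x : A), α n (β g x) = β g (α n x))
    (hαc : ∀ b ∈ B, ∀ a : A,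
      Filter.Tendsto (fun n => ‖α n b * a - a * α n b‖) Filter.atTop (nhds 0)) :
    ∀ ε : ℝ, 0 < ε → ∀ F : Finset A,
      ∃ f : Fin (d + 1) → G → A,
        (∀ l g, 0 ≤ f l g ∧ ‖f l g‖ ≤ 1) ∧
        (∀ l (g h : G), g ≠ h → ‖f l g * f l h‖ < ε) ∧
        ‖(∑ l, ∑ g, f l g) - 1‖ < ε ∧
        (∀ l (g h : G), ‖β h (f l g) - f l (h * g)‖ < ε) ∧
        (∀ l g, ∀ a ∈ F, ‖f l g * a - a * f l g‖ < ε) := by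
  intro ε hε F
  -- Towers in `B` are moved by `α n` to towers that almost commute with `F` for large `n`.
  obtain ⟨f, hf, horth, hsum, hequiv, -⟩ := hrokB ε hε ∅ (by simp)
  have htower : IsRokhlinTower β ε f := ⟨fun l g => (hf l g).2, horth, hsum, hequiv⟩
  obtain ⟨n, hcomm⟩ := (eventually_forall_norm_commutator_lt
    (x := fun n (p : Fin (d + 1) × G) => α n (f p.1 p.2))
    (fun p a => hαc _ (hf p.1 p.2).1 a) F hε).exists
  obtain ⟨hpos, horth', hsum', hequiv'⟩ := htower.map (α n) (hαβ n)
  exact ⟨_, hpos, horth', hsum', hequiv', fun l g => hcomm (l, g)⟩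

/-- Abstraction of Lemma 4.2/Corollary 4.4: finite Rokhlin dimension for the action
restricted to an invariant unital subalgebra, together with a sequence of equivariant
automorphisms asymptotically centralizing the subalgebra, gives finite Rokhlin
dimension on the whole algebra. -/
theorem stmt17 {A : Type*} [NormedRing A] [StarRing A] [CStarRing A]
    [CompleteSpace A] [NormedAlgebra ℂ A] [StarModule ℂ A]
    [PartialOrder A] [StarOrderedRing A]
    {G : Type*} [Group G] [Fintype G]
    (β : G → A ≃⋆ₐ[ℂ] A) (hβmul : ∀ (g h : G) (x : A), β (g * h) x = β g (β h x))
    (B : StarSubalgebra ℂ A) (hBinv : ∀ (g : G), ∀ b ∈ B, β g b ∈ B)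
    (d : ℕ)
    (hrokB : ∀ ε : ℝ, 0 < ε → ∀ F : Finset A, (∀ a ∈ F, a ∈ B) →
      ∃ f : Fin (d + 1) → G → A,
        (∀ l g, f l g ∈ B ∧ 0 ≤ f l g ∧ ‖f l g‖ ≤ 1) ∧
        (∀ l (g h : G), g ≠ h → ‖f l g * f l h‖ < ε) ∧
        ‖(∑ l, ∑ g, f l g) - 1‖ < ε ∧
        (∀ l (g h : G), ‖β h (f l g) - f l (h * g)‖ < ε) ∧
        (∀ l g, ∀ a ∈ F, ‖f l g * a - a * f l g‖ < ε))
    (α : ℕ → A ≃⋆ₐ[ℂ] A)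
    (hαβ : ∀ (n : ℕ) (g : G) (x : A), α n (β g x) = β g (α n x))
    (hαc : ∀ b ∈ B, ∀ a : A,
      Filter.Tendsto (fun n => ‖α n b * a - a * α n b‖) Filter.atTop (nhds 0)) :
    ∀ ε : ℝ, 0 < ε → ∀ F : Finset A,
      ∃ f : Fin (d + 1) → G → A,
        (∀ l g, 0 ≤ f l g ∧ ‖f l g‖ ≤ 1) ∧
        (∀ l (g h : G), g ≠ h → ‖f l g * f l h‖ < ε) ∧
        ‖(∑ l, ∑ g, f l g) - 1‖ < ε ∧
        (∀ l (g h : G), ‖β h (f l g) - f l (h * g)‖ < ε) ∧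
        (∀ l g, ∀ a ∈ F, ‖f l g * a - a * f l g‖ < ε) :=
  stmt17_general β B d hrokB α hαβ hαc
end
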